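/- Let T : 𝔄'×𝔄' → 𝔄' be a product satisfying ⟨T_α β, X⟩ = ρ(X)(r(α,β)) − r(S*_X α, β) − r(α, S*_X β) + ⟨S*_{r_#(α)} β, X⟩ for all X ∈ 𝔄, let T*_α X = r_#(S*_X α) + [r_#(α), X]_S, and define R^∇(α,X)β = T_α(S*_X β) − S*_X(T_α β) + T_{S*_X α} β − S*_{T*_α X} β. Let 𝔞(α,β) = (1/2)(r(α,β) − r(β,α)) be the skew-symmetric part of r, and for a bilinear form b on 𝔄' set (S_X b)(α,β) = ρ(X)(b(α,β)) − b(S*_X α, β) − b(α, S*_X β) and (S²_{X,Y} b)(α,β) = (S_X(S_Y b))(α,β) − (S_{S_X Y} b)(α,β). Then for all X, Y ∈ 𝔄 and α, β ∈ 𝔄': ⟨R^∇(α,X)β − R^∇(β,X)α, Y⟩ = −2 (S²_{X,Y} 𝔞)(α,β). (Second identity of Lemma 'lemma', Section 4.) -/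
import Mathlib


/-!
Statement 13 (second identity of Lemma `lemma`, Section 4):
`⟨R^∇(α,X)β − R^∇(β,X)α, Y⟩ = −2 (S²_{X,Y} 𝔞)(α,β)`,
where `𝔞` is the skew-symmetric part of `r`.
-/

section

variable {R : Type*} [CommRing R] [Algebra ℝ R]
variable {A : Type*} [AddCommGroup A] [Module R A] [Module ℝ A] [IsScalarTower ℝ R A]
variable {A' : Type*} [AddCommGroup A'] [Module R A'] [Module ℝ A'] [IsScalarTower ℝ R A']

/-- The bilinear form `r(α,β) = ⟨β, r_#(α)⟩`. -/
def rForm (pa : A' →ₗ[R] A →ₗ[R] R) (rsharp : A' →ₗ[R] A) (α β : A') : R :=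
  pa β (rsharp α)

/-- `T*_α X = r_#(S*_X α) + [r_#(α), X]_S`. -/
def TstarR (S : A →ₗ[ℝ] A →ₗ[ℝ] A) (Sstar : A → A' → A') (rsharp : A' →ₗ[R] A)
    (α : A') (X : A) : A :=
  rsharp (Sstar X α) + (S (rsharp α) X - S X (rsharp α))

/-- `R^∇(α,X)β = T_α(S*_X β) − S*_X(T_α β) + T_{S*_X α} β − S*_{T*_α X} β`. -/
def curvαX (S : A →ₗ[ℝ] A →ₗ[ℝ] A) (Sstar : A → A' → A') (rsharp : A' →ₗ[R] A)
    (Tprod : A' → A' → A') (α : A') (X : A) (β : A') : A' :=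
  Tprod α (Sstar X β) - Sstar X (Tprod α β) + Tprod (Sstar X α) β
    - Sstar (TstarR S Sstar rsharp α X) β

/-- The skew-symmetric part `𝔞(α,β) = (1/2)(r(α,β) − r(β,α))` of `r`. -/
noncomputable def aForm (pa : A' →ₗ[R] A →ₗ[R] R) (rsharp : A' →ₗ[R] A) (α β : A') : R :=
  ((2 : ℝ)⁻¹) • (rForm pa rsharp α β - rForm pa rsharp β α)

/-- `(S_X b)(α,β) = ρ(X)(b(α,β)) − b(S*_X α, β) − b(α, S*_X β)` for a bilinear
form `b` on `A'`. -/
def Sb (ρ : A →ₗ[R] Derivation ℝ R R) (Sstar : A → A' → A')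
    (X : A) (b : A' → A' → R) (α β : A') : R :=
  ρ X (b α β) - b (Sstar X α) β - b α (Sstar X β)

/-- `(S²_{X,Y} b)(α,β) = (S_X(S_Y b))(α,β) − (S_{S_X Y} b)(α,β)`. -/
def S2b (ρ : A →ₗ[R] Derivation ℝ R R) (S : A →ₗ[ℝ] A →ₗ[ℝ] A)
    (Sstar : A → A' → A') (X Y : A) (b : A' → A' → R) (α β : A') : R :=
  Sb ρ Sstar X (Sb ρ Sstar Y b) α β - Sb ρ Sstar (S X Y) b α β

theorem stmt13
    (pa : A' →ₗ[R] A →ₗ[R] R)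
    (hnd1 : ∀ α : A', (∀ X : A, pa α X = 0) → α = 0)
    (hnd2 : ∀ X : A, (∀ α : A', pa α X = 0) → X = 0)
    (ρ : A →ₗ[R] Derivation ℝ R R)
    (S : A →ₗ[ℝ] A →ₗ[ℝ] A)
    (hS1 : ∀ (f : R) (X Y : A), S (f • X) Y = f • S X Y)
    (hS2 : ∀ (X : A) (f : R) (Y : A), S X (f • Y) = f • S X Y + ρ X f • Y)
    (hSflat : ∀ X Y Z : A, S X (S Y Z) - S Y (S X Z) = S (S X Y - S Y X) Z)
    (hρ : ∀ (X Y : A) (f : R),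
      ρ (S X Y - S Y X) f = ρ X (ρ Y f) - ρ Y (ρ X f))
    (Sstar : A → A' → A')
    (hSstar : ∀ (X : A) (α : A') (Y : A),
      pa (Sstar X α) Y = ρ X (pa α Y) - pa α (S X Y))
    (rsharp : A' →ₗ[R] A)
    (Tprod : A' → A' → A')
    (hT : ∀ (α β : A') (X : A),
      pa (Tprod α β) X
        = ρ X (rForm pa rsharp α β) - rForm pa rsharp (Sstar X α) β
          - rForm pa rsharp α (Sstar X β) + pa (Sstar (rsharp α) β) X) :
    ∀ (X Y : A) (α β : A'),
      pa (curvαX S Sstar rsharp Tprod α X β - curvαX S Sstar rsharp Tprod β X α) Y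
        = -(2 * S2b ρ S Sstar X Y (aForm pa rsharp) α β) := by

    intro X Y α β
    have key : ∀ (γ δ : A'),
        pa (curvαX S Sstar rsharp Tprod γ X δ) Y
          = -(S2b ρ S Sstar X Y (rForm pa rsharp) γ δ) := by
      intro γ δ
      have h1 : ρ (S (rsharp γ) X) (pa δ Y) - ρ (S X (rsharp γ)) (pa δ Y)
          = ρ (rsharp γ) (ρ X (pa δ Y)) - ρ X (ρ (rsharp γ) (pa δ Y)) := by
        have := hρ (rsharp γ) X (pa δ Y)
        simpa [map_sub] using this
      have h2 : pa δ (S (rsharp γ) (S X Y)) - pa δ (S X (S (rsharp γ) Y))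
          = pa δ (S (S (rsharp γ) X) Y) - pa δ (S (S X (rsharp γ)) Y) := by
        have := congrArg (pa δ) (hSflat (rsharp γ) X Y)
        simpa [map_sub] using this
      simp only [curvαX, TstarR, S2b, Sb, rForm, map_add, map_sub, hT, hSstar,
        Derivation.add_apply, Derivation.sub_apply, LinearMap.add_apply, LinearMap.sub_apply]
      linear_combination -h1 - h2
    rw [map_sub, LinearMap.sub_apply, key, key]
    simp only [S2b, Sb, aForm, rForm, map_smul, Derivation.map_smul, map_sub, smul_sub, Derivation.sub_apply,
      LinearMap.sub_apply, two_mul]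
    module

end
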